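/- arXiv:1609.08815 — 7 statements merged into one kernel-verified Lean document; each statement's English description precedes it below -/
import Mathlib

section
/- Let G be a finite group with subgroups A and B such that G = AB, and let K be a subgroup of B. If A permutes with K^b (i.e., A·K^b = K^b·A as sets) for all b ∈ B, then A permutes with K^x for all x ∈ G. -/
open Subgroup Pointwise

variable {G : Type*}

/-- The conjugate subgroup `K ^ x = x⁻¹ K x`. -/
def sconj [Group G] (x : G) (K : Subgroup G) : Subgroup G :=
  K.map (MulAut.conj x⁻¹).toMonoidHom

/-- Two subgroups permute if `AB = BA` as subsets. -/
def permutes [Group G] (A B : Subgroup G) : Prop :=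
  (A : Set G) * (B : Set G) = (B : Set G) * (A : Set G)

/-- `H/K` is a chief factor of `G`. -/
def IsChiefFactor [Group G] (K H : Subgroup G) : Prop :=
  K.Normal ∧ H.Normal ∧ K < H ∧ ∀ N : Subgroup G, N.Normal → K < N → N ≤ H → N = H

/-- The factor `H/K` is cyclic (generated by a single coset). -/
def CyclicFactor [Group G] (K H : Subgroup G) : Prop :=
  ∃ g ∈ H, ∀ h ∈ H, ∃ n : ℤ, (g ^ n)⁻¹ * h ∈ K

/-- A group is `p`-soluble if every chief factor is a `p`-group or a `p'`-group. -/
def pSoluble (p : ℕ) (X : Type*) [Group X] : Prop :=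
  ∀ K H : Subgroup X, IsChiefFactor K H →
    (∃ n : ℕ, (K.subgroupOf H).index = p ^ n) ∨ ¬ p ∣ (K.subgroupOf H).index

/-- `p`-supersoluble: `p`-soluble and chief factors of order divisible by `p` have order `p`. -/
def pSupersoluble (p : ℕ) (X : Type*) [Group X] : Prop :=
  pSoluble p X ∧ ∀ K H : Subgroup X, IsChiefFactor K H →
    p ∣ (K.subgroupOf H).index → (K.subgroupOf H).index = p

/-- A Hall `s`-subgroup: its order involves only primes in `s`, its index none. -/
def IsHallSigmaSubgroup {X : Type*} [Group X] (s : Set ℕ) (H : Subgroup X) : Prop :=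
  (∀ q : ℕ, q.Prime → q ∣ Nat.card H → q ∈ s) ∧
    ∀ q : ℕ, q.Prime → q ∣ H.index → q ∉ s

/-- `σ` is a partition of the set of all primes. -/
def IsPrimePartition {ι : Type*} (σ : ι → Set ℕ) : Prop :=
  (∀ i, ∀ q ∈ σ i, Nat.Prime q) ∧ ∀ q : ℕ, q.Prime → ∃! i, q ∈ σ i

/-- `ℋ` (with labelling `j`) is a complete Hall `σ`-set. -/
def IsCompleteHallSigmaSet {X : Type*} [Group X] {ι : Type*} (σ : ι → Set ℕ)
    {t : ℕ} (ℋ : Fin t → Subgroup X) (j : Fin t → ι) : Prop :=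
  Function.Injective j ∧ (∀ i, IsHallSigmaSubgroup (σ (j i)) (ℋ i)) ∧
    ∀ a : ι, (∃ q : ℕ, q.Prime ∧ q ∈ σ a ∧ q ∣ Nat.card X) → ∃ i, j i = a

/-- `H` is σ-semipermutable with respect to `ℋ`. -/
def SigmaSemipermutable {X : Type*} [Group X] {t : ℕ} (H : Subgroup X)
    (ℋ : Fin t → Subgroup X) : Prop :=
  ∀ i : Fin t, Nat.Coprime (Nat.card H) (Nat.card (ℋ i)) →
    ∀ x : X, permutes H (sconj x (ℋ i))

/-- `E/O ≤ Z_∞(G/O)`: there is an ascending chain from `O` which is central over `O`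
and covers `E`. -/
def LeHypercenterOver [Group G] (O E : Subgroup G) : Prop :=
  ∃ n : ℕ, ∃ Z : ℕ → Subgroup G, Z 0 = O ∧ E ≤ Z n ∧
    ∀ i < n, Z i ≤ Z (i + 1) ∧ ∀ z ∈ Z (i + 1), ∀ g : G, z * g * z⁻¹ * g⁻¹ ∈ Z i

/-- `p`-nilpotent: has a normal `p`-complement. -/
def pNilpotent (p : ℕ) (X : Type*) [Group X] : Prop :=
  ∃ N : Subgroup X, N.Normal ∧ ¬ p ∣ Nat.card N ∧
    ∀ q : ℕ, q.Prime → q ∣ N.index → q = p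

/-- `O_{p'}(E)`, the largest normal `p'`-subgroup of `E`, as a subgroup of `G`. -/
def OpPrime (p : ℕ) [Group G] (E : Subgroup G) : Subgroup G :=
  ⨆ N ∈ {N : Subgroup G | N ≤ E ∧ (N.subgroupOf E).Normal ∧ ¬ p ∣ Nat.card N}, N

/-- `O_π(X)`, the largest normal `π`-subgroup. -/
def Oset (π : Set ℕ) (X : Type*) [Group X] : Subgroup X :=
  ⨆ N ∈ {N : Subgroup X | N.Normal ∧ ∀ q : ℕ, q.Prime → q ∣ Nat.card N → q ∈ π}, N

/-- The Fitting subgroup: join of all normal nilpotent subgroups. -/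
def FittingSub (X : Type*) [Group X] : Subgroup X :=
  ⨆ N ∈ {N : Subgroup X | N.Normal ∧ Group.IsNilpotent N}, N

/-- `G/C` is strictly `p`-closed (stated internally in `G`, over the subgroup `C`). -/
def StrictlyPClosedOver [Group G] (p : ℕ) (C : Subgroup G) : Prop :=
  ∃ S : Subgroup G, C ≤ S ∧ S.Normal ∧ (∀ s ∈ S, ∃ n : ℕ, s ^ p ^ n ∈ C) ∧
    ¬ p ∣ S.index ∧ (∀ a b : G, a * b * a⁻¹ * b⁻¹ ∈ S) ∧ ∀ a : G, a ^ (p - 1) ∈ S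

section Conjugation

variable [Group G]

lemma coe_sconj (x : G) (K : Subgroup G) :
    (sconj x K : Set G) = MulAut.conj x⁻¹ '' K :=
  coe_map _ K

lemma sconj_mul (x y : G) (K : Subgroup G) : sconj (x * y) K = sconj y (sconj x K) := by
  simp only [sconj, map_map]
  congr 1
  ext g
  simp [mul_assoc]

lemma sconj_eq_self_of_mem {A : Subgroup G} {a : G} (ha : a ∈ A) : sconj a A = A :=
  mem_normalizer_iff_map_conj_eq.mp (le_normalizer (A.inv_mem ha))

lemma permutes.sconj_sconj {A H : Subgroup G} (hAH : permutes A H) (x : G) :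
    permutes (sconj x A) (sconj x H) := by
  simp only [permutes, coe_sconj, ← Set.image_mul]
  rw [hAH]

lemma permutes.sconj_of_mem {A H : Subgroup G} (hAH : permutes A H) {a : G} (ha : a ∈ A) :
    permutes A (sconj a H) := by
  simpa only [sconj_eq_self_of_mem ha] using hAH.sconj_sconj a

end Conjugation

theorem stmt0_general [Group G] (A B K : Subgroup G)
    (hG : (A : Set G) * (B : Set G) = Set.univ)
    (h : ∀ b ∈ B, permutes A (sconj b K)) :
    ∀ x : G, permutes A (sconj x K) := by
  intro x
  obtain ⟨a, ha, b, hb, hab⟩ : x⁻¹ ∈ (A : Set G) * (B : Set G) := hG ▸ Set.mem_univ _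
  have hx : x = b⁻¹ * a⁻¹ := by rw [← mul_inv_rev, show a * b = x⁻¹ from hab, inv_inv]
  rw [hx, sconj_mul]
  exact (h b⁻¹ (B.inv_mem hb)).sconj_of_mem (A.inv_mem ha)

/-- If `G = AB`, `K ≤ B` and `A` permutes with `K^b` for all `b ∈ B`,
then `A` permutes with `K^x` for all `x ∈ G`. -/
theorem stmt0 [Group G] [Finite G] (A B K : Subgroup G)
    (hG : (A : Set G) * (B : Set G) = Set.univ) (hKB : K ≤ B)
    (h : ∀ b ∈ B, permutes A (sconj b K)) :
    ∀ x : G, permutes A (sconj x K) :=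
  stmt0_general A B K hG h
end

section
/- Let P be a normal p-subgroup of a finite group G. Then every chief factor of G below P is cyclic (i.e., P is hypercyclically embedded in G) if and only if G/C_G(P) is strictly p-closed. -/
open Subgroup Pointwise

variable {G : Type*}

/-!
If every chief factor `H/K` of `G` below `P` is cyclic, it has order `p`, so `G` acts on it
through the abelian group `Aut(C_p)` of order `p - 1`. The kernel `S` of the action of `G` on all
these factors therefore contains all commutators and `(p - 1)`-th powers, and `S/C_G(P)` is a
`p`-group since a `p'`-element stabilizing a normal series of the `p`-group `P` centralizes `P`.

Conversely, a chief factor `H/K` below `P` is a minimal normal `p`-subgroup of `G/K`. The image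
of `S` acts on it through a `p`-group, hence fixes a nontrivial element and, by minimality,
centralizes `H/K`. So `G` acts on the elementary abelian group `H/K` through an abelian group of
exponent dividing `p - 1`: every element of `G` has an eigenvector over `𝔽_p`, whose eigenspace is
normal and hence all of `H/K`. Thus `G` acts on `H/K` by scalars, every cyclic subgroup of `H/K`
is normal, and `H/K` is cyclic.
-/

open Polynomial
open scoped commutatorElement

theorem Module.End.exists_hasEigenvalue_of_aeval_eq_zero {K V : Type*} [Field K]
    [AddCommGroup V] [Module K V] [FiniteDimensional K V] [Nontrivial V] {f : Module.End K V}
    {g : K[X]} (hg : g.Splits) (hg0 : g ≠ 0) (hfg : aeval f g = 0) : ∃ μ, f.HasEigenvalue μ := by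
  have hsplit : (minpoly K f).Splits := hg.of_dvd hg0 (minpoly.dvd K f hfg)
  have hdeg : (minpoly K f).degree ≠ 0 :=
    (minpoly.degree_pos (Algebra.IsIntegral.isIntegral f)).ne'
  obtain ⟨μ, hμ⟩ := hsplit.exists_eval_eq_zero hdeg
  exact ⟨μ, Module.End.hasEigenvalue_of_isRoot hμ⟩

/-- On the `𝔽_p`-vector space `A`, `σ` is annihilated by `X ^ p - X`, which splits over `𝔽_p`. -/
theorem MulAut.exists_ne_one_apply_eq_pow {A : Type*} [CommGroup A] [Finite A] [Nontrivial A]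
    {p : ℕ} [hp : Fact p.Prime] (hA : ∀ a : A, a ^ p = 1) (σ : MulAut A) (hσ : σ ^ (p - 1) = 1) :
    ∃ a : A, a ≠ 1 ∧ ∃ m : ℕ, σ a = a ^ m := by
  have _ : Module (ZMod p) (Additive A) :=
    AddCommGroup.zmodModule fun a ↦ congrArg Additive.ofMul (hA a.toMul)
  let f : Module.End (ZMod p) (Additive A) := σ.toMonoidHom.toAdditive.toZModLinearMap p
  have hf_pow (n : ℕ) (v : Additive A) : (f ^ n) v = Additive.ofMul ((σ ^ n) v.toMul) := by
    induction n with
    | zero => rfl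
    | succ n ih => rw [pow_succ', pow_succ', Module.End.mul_apply, ih]; rfl
  have hf : f ^ p = f := by
    have h1 : f ^ (p - 1) = 1 := LinearMap.ext fun v ↦ by rw [hf_pow, hσ]; rfl
    calc f ^ p = f ^ (p - 1) * f := by rw [← pow_succ, Nat.sub_one_add_one hp.out.ne_zero]
      _ = f := by rw [h1, one_mul]
  have hsplits : (X ^ p - X : (ZMod p)[X]).Splits := by
    simpa [ZMod.card] using FiniteField.splits_X_pow_card_sub_X p (K := ZMod p)
  have hne : (X ^ p - X : (ZMod p)[X]) ≠ 0 := by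
    simpa [ZMod.card] using FiniteField.X_pow_card_sub_X_ne_zero (ZMod p) hp.out.one_lt
  obtain ⟨μ, hμ⟩ :=
    Module.End.exists_hasEigenvalue_of_aeval_eq_zero (f := f) hsplits hne (by simp [hf])
  obtain ⟨v, hv_mem, hv0⟩ := hμ.exists_hasEigenvector
  refine ⟨v.toMul, fun h ↦ hv0 (by simpa using congrArg Additive.ofMul h), μ.val, ?_⟩
  have hv := Module.End.mem_eigenspace_iff.mp hv_mem
  rw [← ZMod.natCast_zmod_val μ, Nat.cast_smul_eq_nsmul] at hv
  exact congrArg Additive.toMul hv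

section

variable [Group G]

theorem MulAut.conjNormal_eq_one_iff {N : Subgroup G} [N.Normal] {g : G} :
    MulAut.conjNormal g = (1 : MulAut N) ↔ g ∈ centralizer (N : Set G) := by
  simp only [MulEquiv.ext_iff, MulAut.one_apply, Subtype.ext_iff, MulAut.conjNormal_apply,
    mem_centralizer_iff, SetLike.mem_coe, Subtype.forall]
  exact forall₂_congr fun x _ ↦ by rw [mul_inv_eq_iff_eq_mul, eq_comm]

theorem commutatorElement_eq_one_of_mem_centralizer {s : Set G} {c x : G}
    (hc : c ∈ centralizer s) (hx : x ∈ s) : ⁅c, x⁆ = 1 :=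
  commutatorElement_eq_one_iff_mul_comm.mpr (mem_centralizer_iff.mp hc x hx).symm

theorem pow_sub_one_mem_centralizer {N : Subgroup G} [N.Normal] [Finite N] {p : ℕ}
    [hp : Fact p.Prime] (hN : Nat.card N = p) (g : G) : g ^ (p - 1) ∈ centralizer (N : Set G) := by
  have : IsCyclic N := isCyclic_of_prime_card hN
  have hcard : Nat.card (MulAut N) = p - 1 := by
    rw [IsCyclic.card_mulAut, hN, Nat.totient_prime hp.out]
  rw [← MulAut.conjNormal_eq_one_iff, map_pow, ← hcard]
  exact pow_card_eq_one'

theorem commutatorElement_mem_centralizer {N : Subgroup G} [N.Normal] [IsCyclic N] (a b : G) :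
    ⁅a, b⁆ ∈ centralizer (N : Set G) := by
  have hcomm (σ τ : MulAut N) : σ * τ = τ * σ :=
    (IsCyclic.mulAutMulEquiv N).injective (by simp only [map_mul, mul_comm])
  rw [← MulAut.conjNormal_eq_one_iff, map_commutatorElement,
    commutatorElement_eq_one_iff_mul_comm]
  exact hcomm _ _

theorem mk_mem_centralizer_map_iff {K H : Subgroup G} [K.Normal] {g : G} :
    (g : G ⧸ K) ∈ centralizer (H.map (QuotientGroup.mk' K) : Set (G ⧸ K)) ↔
      ∀ x ∈ H, ⁅g, x⁆ ∈ K := by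
  have hmk (x : G) : ((⁅g, x⁆ : G) : G ⧸ K) = ⁅(g : G ⧸ K), (x : G ⧸ K)⁆ :=
    map_commutatorElement (QuotientGroup.mk' K) g x
  simp only [mem_centralizer_iff, SetLike.mem_coe, mem_map, forall_exists_index, and_imp,
    forall_apply_eq_imp_iff₂, QuotientGroup.mk'_apply, ← QuotientGroup.eq_one_iff, hmk,
    commutatorElement_eq_one_iff_mul_comm]
  exact forall₂_congr fun x _ ↦ eq_comm

theorem cyclicFactor_iff_isCyclic {K H : Subgroup G} [K.Normal] :
    CyclicFactor K H ↔ IsCyclic (H.map (QuotientGroup.mk' K)) := by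
  rw [Subgroup.isCyclic_iff_exists_zpowers_eq_top]
  constructor
  · rintro ⟨c, hc, hgen⟩
    refine ⟨c, le_antisymm (zpowers_le.mpr ⟨c, hc, rfl⟩) ?_⟩
    rintro _ ⟨x, hx, rfl⟩
    obtain ⟨n, hn⟩ := hgen x hx
    refine ⟨n, ?_⟩
    change (c : G ⧸ K) ^ n = x
    rw [← QuotientGroup.mk_zpow]
    exact QuotientGroup.eq.mpr hn
  · rintro ⟨_, hgen⟩
    obtain ⟨c, hc, rfl⟩ := hgen ▸ mem_zpowers _
    refine ⟨c, hc, fun x hx ↦ ?_⟩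
    obtain ⟨n, hn⟩ := mem_zpowers_iff.mp (hgen ▸ mem_map_of_mem _ hx)
    exact ⟨n, QuotientGroup.eq.mp (by rw [QuotientGroup.mk_zpow]; exact hn)⟩

/-- `x⁻¹ t x = d t` with `d ∈ K` commuting with `t`, so `d ^ orderOf t = 1`; as `d` is a
`p`-element, `d = 1`. -/
theorem commute_of_commutatorElement_mem {p : ℕ} {K : Subgroup G} [K.Normal] (hK : IsPGroup p K)
    {t x : G} (ht : p.Coprime (orderOf t)) (htK : ∀ k ∈ K, Commute t k) (hx : ⁅t, x⁆ ∈ K) :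
    Commute t x := by
  have hd : ⁅x⁻¹, t⁆ ∈ K := by
    convert ‹K.Normal›.conj_mem _ hx x⁻¹ using 1
    rw [commutatorElement_def, commutatorElement_def]
    group
  have hpow : ⁅x⁻¹, t⁆ ^ orderOf t = 1 :=
    calc ⁅x⁻¹, t⁆ ^ orderOf t = ⁅x⁻¹, t⁆ ^ orderOf t * t ^ orderOf t := by
          rw [pow_orderOf_eq_one, mul_one]
      _ = (x⁻¹ * t * x⁻¹⁻¹) ^ orderOf t := by
          rw [← (htK _ hd).symm.mul_pow, commutatorElement_def]
          group
      _ = 1 := by rw [conj_pow, pow_orderOf_eq_one]; group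
  obtain ⟨k, hk⟩ := hK ⟨_, hd⟩
  have hord : orderOf ⁅x⁻¹, t⁆ = 1 := Nat.eq_one_of_dvd_coprimes (ht.pow_left k)
    (orderOf_dvd_of_pow_eq_one (by simpa using congrArg Subtype.val hk))
    (orderOf_dvd_of_pow_eq_one hpow)
  rw [orderOf_eq_one_iff, commutatorElement_eq_one_iff_mul_comm] at hord
  exact Commute.inv_right_iff.mp (Commute.symm hord)

theorem coprime_orderOf_pow_ordProj [Finite G] {p : ℕ} (hp : p.Prime) (g : G) :
    p.Coprime (orderOf (g ^ p ^ (orderOf g).factorization p)) := by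
  rw [orderOf_pow_of_dvd (pow_ne_zero _ hp.ne_zero) (Nat.ordProj_dvd _ _)]
  exact Nat.coprime_ordCompl hp (orderOf_pos g).ne'

theorem not_dvd_index_of_forall_pow_mem [Finite G] {p n : ℕ} [Fact p.Prime] (hpn : p.Coprime n)
    {S : Subgroup G} [S.Normal] (h : ∀ g : G, g ^ n ∈ S) : ¬ p ∣ S.index := by
  intro hdvd
  rw [index_eq_card] at hdvd
  obtain ⟨x, hx⟩ := exists_prime_orderOf_dvd_card' p hdvd
  obtain ⟨g, rfl⟩ := QuotientGroup.mk_surjective x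
  have hpow : (g : G ⧸ S) ^ n = 1 := by
    rw [← QuotientGroup.mk_pow, QuotientGroup.eq_one_iff]
    exact h g
  exact (Fact.out : p.Prime).one_lt.ne' (hpn.eq_one_of_dvd (hx ▸ orderOf_dvd_of_pow_eq_one hpow))

theorem exists_isChiefFactor_of_ne_bot [Finite G] {N : Subgroup G} (hN : N.Normal) (hN1 : N ≠ ⊥) :
    ∃ K, IsChiefFactor K N := by
  obtain ⟨K, -, hK⟩ := Finite.exists_le_maximal (p := fun K : Subgroup G ↦ K.Normal ∧ K < N)
    ⟨normal_bot, bot_lt_iff_ne_bot.mpr hN1⟩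
  refine ⟨K, hK.prop.1, hN, hK.prop.2, fun M hM hKM hMN ↦ ?_⟩
  by_contra hne
  exact hK.not_gt ⟨hM, lt_of_le_of_ne hMN hne⟩ hKM

namespace IsChiefFactor

variable {K H N : Subgroup G}

theorem normal_left (h : IsChiefFactor K H) : K.Normal := h.1

theorem normal_right (h : IsChiefFactor K H) : H.Normal := h.2.1

theorem lt (h : IsChiefFactor K H) : K < H := h.2.2.1

theorem eq_of_ne_bot (hN : IsChiefFactor ⊥ N) {M : Subgroup G} (hM : M.Normal) (hMN : M ≤ N)
    (hM1 : M ≠ ⊥) : M = N :=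
  hN.2.2.2 M hM (bot_lt_iff_ne_bot.mpr hM1) hMN

theorem nontrivial (hN : IsChiefFactor ⊥ N) : Nontrivial N :=
  (nontrivial_iff_ne_bot N).mpr hN.lt.ne'

theorem map_mk [K.Normal] (h : IsChiefFactor K H) :
    IsChiefFactor ⊥ (H.map (QuotientGroup.mk' K)) := by
  have hsurj := QuotientGroup.mk'_surjective K
  refine ⟨normal_bot, h.normal_right.map _ hsurj, bot_lt_iff_ne_bot.mpr fun hbot ↦ ?_,
    fun M hM hbotM hMH ↦ ?_⟩
  · refine h.lt.not_ge fun x hx ↦ ?_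
    rw [← QuotientGroup.ker_mk' K, MonoidHom.mem_ker, ← mem_bot, ← hbot]
    exact mem_map_of_mem _ hx
  · have hcomap : M.comap (QuotientGroup.mk' K) = H := by
      refine h.2.2.2 _ (hM.comap _) (lt_of_le_of_ne ?_ fun hK ↦ hbotM.ne' ?_) ?_
      · intro k hk
        rw [mem_comap, QuotientGroup.mk'_apply, (QuotientGroup.eq_one_iff k).mpr hk]
        exact M.one_mem
      · rw [← map_comap_eq_self_of_surjective hsurj M, ← hK, QuotientGroup.map_mk'_self]
      · intro x hx
        obtain ⟨y, hy, hyx⟩ := hMH hx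
        simpa using H.mul_mem hy (h.lt.le (QuotientGroup.eq.mp hyx))
    rw [← hcomap, map_comap_eq_self_of_surjective hsurj]

/-- The eigenspace `{u ∈ N | q u q⁻¹ = u ^ m}` is normal, since conjugation by `q` commutes with
the action of `G` on `N`. -/
theorem forall_conj_eq_pow [IsMulCommutative N] (hN : IsChiefFactor ⊥ N) {q : G}
    (hq : ∀ r : G, ⁅q, r⁆ ∈ centralizer (N : Set G)) {y : G} (hyN : y ∈ N) (hy1 : y ≠ 1) {m : ℕ}
    (hy : q * y * q⁻¹ = y ^ m) : ∀ u ∈ N, q * u * q⁻¹ = u ^ m := by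
  have hNn := hN.normal_right
  let E : Subgroup G :=
    { carrier := {u | u ∈ N ∧ q * u * q⁻¹ = u ^ m}
      one_mem' := ⟨N.one_mem, by group⟩
      mul_mem' := fun {a b} ⟨ha, ha'⟩ ⟨hb, hb'⟩ ↦ ⟨N.mul_mem ha hb, by
        rw [Commute.mul_pow (setLike_mul_comm ha hb), ← ha', ← hb']; group⟩
      inv_mem' := fun {a} ⟨ha, ha'⟩ ↦ ⟨N.inv_mem ha, by rw [inv_pow, ← ha']; group⟩ }
  have hEn : E.Normal := by
    refine ⟨fun u ⟨hu, hu'⟩ r ↦ ⟨hNn.conj_mem u hu r, ?_⟩⟩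
    have hw : r * (q * u * q⁻¹) * r⁻¹ ∈ N := hNn.conj_mem _ (hNn.conj_mem u hu q) r
    calc q * (r * u * r⁻¹) * q⁻¹
        = ⁅q, r⁆ * (r * (q * u * q⁻¹) * r⁻¹) * ⁅q, r⁆⁻¹ := by
          rw [commutatorElement_def]; group
      _ = r * (q * u * q⁻¹) * r⁻¹ := by
          rw [← mem_centralizer_iff.mp (hq r) _ hw, mul_inv_cancel_right]
      _ = (r * u * r⁻¹) ^ m := by rw [hu', conj_pow]
  have hE : E = N := hN.eq_of_ne_bot hEn (fun u hu ↦ hu.1)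
    (ne_bot_iff_exists_ne_one.mpr ⟨⟨y, hyN, hy⟩, fun h ↦ hy1 (congrArg Subtype.val h)⟩)
  exact fun u hu ↦ (hE ▸ hu : u ∈ E).2

variable {p : ℕ} [Fact p.Prime]

theorem prime_dvd_card (hN : IsChiefFactor ⊥ N) (hNp : IsPGroup p N) : p ∣ Nat.card N :=
  hNp.card_eq_or_dvd.resolve_left fun h ↦ hN.lt.ne' (card_eq_one.mp h)

variable [Finite G]

theorem isMulCommutative (hN : IsChiefFactor ⊥ N) (hNp : IsPGroup p N) : IsMulCommutative N := by
  have := hN.normal_right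
  have := hN.nontrivial
  have := hNp.center_nontrivial
  obtain ⟨z, hz⟩ := exists_ne (1 : center N)
  have hM : centralizer (N : Set G) ⊓ N = N := by
    refine hN.eq_of_ne_bot (normal_inf_normal _ _) inf_le_right
      (ne_bot_iff_exists_ne_one.mpr ⟨⟨z, ?_, (z : N).2⟩, ?_⟩)
    · exact fun x hx ↦ congrArg Subtype.val (mem_center_iff.mp z.2 ⟨x, hx⟩)
    · intro h
      have h' := congrArg Subtype.val h
      exact hz (Subtype.ext (Subtype.ext h'))
  exact le_centralizer_iff_isMulCommutative.mp (hM.ge.trans inf_le_left)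

theorem pow_eq_one [IsMulCommutative N] (hN : IsChiefFactor ⊥ N) (hNp : IsPGroup p N) :
    ∀ x ∈ N, x ^ p = 1 := by
  have hNn := hN.normal_right
  let M : Subgroup G :=
    { carrier := {x | x ∈ N ∧ x ^ p = 1}
      one_mem' := ⟨N.one_mem, one_pow p⟩
      mul_mem' := fun {a b} ⟨ha, ha'⟩ ⟨hb, hb'⟩ ↦ ⟨N.mul_mem ha hb, by
        rw [Commute.mul_pow (setLike_mul_comm ha hb), ha', hb', one_mul]⟩
      inv_mem' := fun {a} ⟨ha, ha'⟩ ↦ ⟨N.inv_mem ha, by rw [inv_pow, ha', inv_one]⟩ }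
  have hMn : M.Normal :=
    ⟨fun x ⟨hx, hx'⟩ g ↦ ⟨hNn.conj_mem x hx g, by rw [conj_pow, hx']; group⟩⟩
  obtain ⟨y, hy⟩ := exists_prime_orderOf_dvd_card' (G := N) p (hN.prime_dvd_card hNp)
  have hM : M = N := by
    refine hN.eq_of_ne_bot hMn (fun x hx ↦ hx.1) (ne_bot_iff_exists_ne_one.mpr ⟨⟨y, y.2, ?_⟩, ?_⟩)
    · rw [← Subgroup.coe_pow, ← hy, pow_orderOf_eq_one, OneMemClass.coe_one]
    · have : y ≠ 1 := fun h ↦ (Fact.out : p.Prime).one_lt.ne' (by rw [← hy, h, orderOf_one])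
      intro h
      have h' := congrArg Subtype.val h
      exact this (Subtype.ext h')
  exact fun x hx ↦ (hM ▸ hx : x ∈ M).2

theorem card_eq_of_isCyclic [IsCyclic N] (hN : IsChiefFactor ⊥ N) (hNp : IsPGroup p N) :
    Nat.card N = p := by
  have := hN.isMulCommutative hNp
  have hexp : Monoid.exponent N ∣ p := Monoid.exponent_dvd_of_forall_pow_eq_one fun x ↦
    Subtype.ext (by simpa using hN.pow_eq_one hNp x x.2)
  rw [IsCyclic.exponent_eq_card] at hexp
  refine ((Nat.dvd_prime Fact.out).mp hexp).resolve_left fun h ↦ hN.lt.ne' ?_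
  exact card_eq_one.mp h

theorem card_map_mk [K.Normal] (h : IsChiefFactor K H) (hH : IsPGroup p H)
    (hcyc : CyclicFactor K H) : Nat.card (H.map (QuotientGroup.mk' K)) = p :=
  have := cyclicFactor_iff_isCyclic.mp hcyc
  h.map_mk.card_eq_of_isCyclic (hH.map _)

/-- `X` acts on `N` through a `p`-subgroup of `Aut N`, which fixes a nontrivial element of the
`p`-group `N`; by minimality, the centralizer of `X` in `N` is all of `N`. -/
theorem le_centralizer (hN : IsChiefFactor ⊥ N) (hNp : IsPGroup p N) {X : Subgroup G} [X.Normal]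
    (hX : ∀ x ∈ X, ∃ k : ℕ, x ^ p ^ k ∈ centralizer (N : Set G)) :
    X ≤ centralizer (N : Set G) := by
  have := hN.normal_right
  let A : Subgroup (MulAut N) := X.map MulAut.conjNormal
  have hA : IsPGroup p A := by
    rintro ⟨_, x, hx, rfl⟩
    obtain ⟨k, hk⟩ := hX x hx
    exact ⟨k, Subtype.ext (by rw [SubmonoidClass.coe_pow, ← map_pow,
      MulAut.conjNormal_eq_one_iff.mpr hk, OneMemClass.coe_one])⟩
  obtain ⟨y, hy, hy1⟩ := hA.exists_fixed_point_of_prime_dvd_card_of_fixed_point N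
    (hN.prime_dvd_card hNp) (a := 1) fun σ ↦ map_one (σ : MulAut N)
  have hM : N ⊓ centralizer (X : Set G) = N := by
    refine hN.eq_of_ne_bot (normal_inf_normal _ _) inf_le_left
      (ne_bot_iff_exists_ne_one.mpr ⟨⟨y, y.2, mem_centralizer_iff.mpr fun x hx ↦ ?_⟩, ?_⟩)
    · have hfix := congrArg Subtype.val (hy ⟨_, mem_map_of_mem _ hx⟩)
      rw [Subgroup.smul_def, MulAut.smul_def, MulAut.conjNormal_apply] at hfix
      exact mul_inv_eq_iff_eq_mul.mp hfix
    · intro h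
      exact hy1 (Subtype.ext (congrArg Subtype.val h).symm)
  exact le_centralizer_iff.mp (hM.ge.trans inf_le_right)

open scoped IsMulCommutative in
theorem isCyclic_of_forall_mem_centralizer (hN : IsChiefFactor ⊥ N) (hNp : IsPGroup p N)
    (hpow : ∀ q : G, q ^ (p - 1) ∈ centralizer (N : Set G))
    (hcomm : ∀ q r : G, ⁅q, r⁆ ∈ centralizer (N : Set G)) : IsCyclic N := by
  have := hN.normal_right
  have := hN.isMulCommutative hNp
  have := hN.nontrivial
  have hscalar (q : G) : ∃ m : ℕ, ∀ u ∈ N, q * u * q⁻¹ = u ^ m := by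
    obtain ⟨y, hy1, m, hy⟩ := MulAut.exists_ne_one_apply_eq_pow (A := N)
      (fun x ↦ Subtype.ext (hN.pow_eq_one hNp x x.2)) (MulAut.conjNormal q)
      (by rw [← map_pow, MulAut.conjNormal_eq_one_iff]; exact hpow q)
    refine ⟨m, hN.forall_conj_eq_pow (hcomm q) y.2 (fun h ↦ hy1 (Subtype.ext h)) ?_⟩
    simpa [Subtype.ext_iff] using hy
  obtain ⟨y, hy1⟩ := exists_ne (1 : N)
  have hzpowers : (zpowers (y : G)).Normal := by
    refine ⟨fun u hu q ↦ ?_⟩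
    obtain ⟨k, rfl⟩ := mem_zpowers_iff.mp hu
    obtain ⟨m, hm⟩ := hscalar q
    refine mem_zpowers_iff.mpr ⟨m * k, ?_⟩
    rw [← conj_zpow, hm y y.2, ← zpow_natCast, ← zpow_mul]
  rw [Subgroup.isCyclic_iff_exists_zpowers_eq_top]
  exact ⟨y, hN.eq_of_ne_bot hzpowers (zpowers_le.mpr y.2)
    (zpowers_ne_bot.mpr fun h ↦ hy1 (Subtype.ext h))⟩

end IsChiefFactor

def chiefStabilizer (P : Subgroup G) : Subgroup G where
  carrier := {g | ∀ K H, IsChiefFactor K H → H ≤ P → ∀ x ∈ H, ⁅g, x⁆ ∈ K}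
  one_mem' K H _ _ x _ := by rw [commutatorElement_one_left]; exact K.one_mem
  mul_mem' {a b} ha hb K H hKH hHP x hx := by
    have hmul : ⁅a * b, x⁆ = a * ⁅b, x⁆ * a⁻¹ * ⁅a, x⁆ := by
      simp only [commutatorElement_def]; group
    rw [hmul]
    exact K.mul_mem (hKH.normal_left.conj_mem _ (hb K H hKH hHP x hx) a) (ha K H hKH hHP x hx)
  inv_mem' {a} ha K H hKH hHP x hx := by
    have hinv : ⁅a⁻¹, x⁆ = a⁻¹ * ⁅a, x⁆⁻¹ * a⁻¹⁻¹ := by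
      simp only [commutatorElement_def]; group
    rw [hinv]
    exact hKH.normal_left.conj_mem _ (K.inv_mem (ha K H hKH hHP x hx)) a⁻¹

instance chiefStabilizer_normal (P : Subgroup G) : (chiefStabilizer P).Normal where
  conj_mem s hs g K H hKH hHP x hx := by
    have hconj : ⁅g * s * g⁻¹, x⁆ = g * ⁅s, g⁻¹ * x * g⁻¹⁻¹⁆ * g⁻¹ := by
      simp only [commutatorElement_def]; group
    rw [hconj]
    exact hKH.normal_left.conj_mem _ (hs K H hKH hHP _ (hKH.normal_right.conj_mem x hx g⁻¹)) g

theorem centralizer_le_chiefStabilizer (P : Subgroup G) :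
    centralizer (P : Set G) ≤ chiefStabilizer P := fun g hg K _ _ hHP x hx ↦ by
  rw [commutatorElement_eq_one_of_mem_centralizer hg (hHP hx)]
  exact K.one_mem

theorem mem_centralizer_of_mem_chiefStabilizer [Finite G] {p : ℕ} {P : Subgroup G}
    (hPn : P.Normal) (hPp : IsPGroup p P) {t : G} (ht : t ∈ chiefStabilizer P)
    (hcop : p.Coprime (orderOf t)) : t ∈ centralizer (P : Set G) := by
  suffices ∀ N : Subgroup G, N.Normal → N ≤ P → t ∈ centralizer (N : Set G) from this P hPn le_rfl
  intro N
  induction N using WellFoundedLT.induction with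
  | ind N ih =>
    intro hN hNP
    rcases eq_or_ne N ⊥ with rfl | hN1
    · exact mem_centralizer_iff.mpr fun x hx ↦ by rw [mem_bot.mp hx, one_mul, mul_one]
    obtain ⟨K, hKN⟩ := exists_isChiefFactor_of_ne_bot hN hN1
    have := hKN.normal_left
    have htK := ih K hKN.lt hKN.normal_left (hKN.lt.le.trans hNP)
    refine mem_centralizer_iff.mpr fun x hx ↦ Eq.symm ?_
    exact commute_of_commutatorElement_mem (hPp.to_le (hKN.lt.le.trans hNP)) hcop
      (fun k hk ↦ (mem_centralizer_iff.mp htK k hk).symm) (ht K N hKN hNP x hx)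

section CyclicFactors

variable [Finite G] {p : ℕ} [Fact p.Prime] {P : Subgroup G}

theorem pow_sub_one_mem_chiefStabilizer (hPp : IsPGroup p P)
    (hcyc : ∀ K H : Subgroup G, IsChiefFactor K H → H ≤ P → CyclicFactor K H) (g : G) :
    g ^ (p - 1) ∈ chiefStabilizer P := fun K H hKH hHP ↦ by
  have := hKH.normal_left
  have := hKH.normal_right.map _ (QuotientGroup.mk'_surjective K)
  refine mk_mem_centralizer_map_iff.mp ?_
  rw [QuotientGroup.mk_pow]
  exact pow_sub_one_mem_centralizer (hKH.card_map_mk (hPp.to_le hHP) (hcyc K H hKH hHP)) _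

theorem commutatorElement_mem_chiefStabilizer (hPp : IsPGroup p P)
    (hcyc : ∀ K H : Subgroup G, IsChiefFactor K H → H ≤ P → CyclicFactor K H) (a b : G) :
    ⁅a, b⁆ ∈ chiefStabilizer P := fun K H hKH hHP ↦ by
  have := hKH.normal_left
  have := hKH.normal_right.map _ (QuotientGroup.mk'_surjective K)
  have := isCyclic_of_prime_card (hKH.card_map_mk (hPp.to_le hHP) (hcyc K H hKH hHP))
  refine mk_mem_centralizer_map_iff.mp ?_
  rw [← QuotientGroup.mk'_apply, map_commutatorElement]
  exact commutatorElement_mem_centralizer _ _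

end CyclicFactors

theorem strictlyPClosedOver_centralizer_of_forall_cyclicFactor [Finite G] {p : ℕ}
    (hp : p.Prime) {P : Subgroup G} (hPn : P.Normal) (hPp : IsPGroup p P)
    (hcyc : ∀ K H : Subgroup G, IsChiefFactor K H → H ≤ P → CyclicFactor K H) :
    StrictlyPClosedOver p (centralizer (P : Set G)) := by
  have := Fact.mk hp
  have hpow := pow_sub_one_mem_chiefStabilizer hPp hcyc
  refine ⟨chiefStabilizer P, centralizer_le_chiefStabilizer P, inferInstance, fun s hs ↦ ?_,
    not_dvd_index_of_forall_pow_mem ((Nat.coprime_self_sub_right hp.one_le).mpr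
      (Nat.coprime_one_right p)) hpow, commutatorElement_mem_chiefStabilizer hPp hcyc, hpow⟩
  exact ⟨_, mem_centralizer_of_mem_chiefStabilizer hPn hPp (pow_mem hs _)
    (coprime_orderOf_pow_ordProj hp s)⟩

theorem cyclicFactor_of_strictlyPClosedOver_centralizer [Finite G] {p : ℕ}
    [Fact p.Prime] {P : Subgroup G} (hPp : IsPGroup p P)
    (hS : StrictlyPClosedOver p (centralizer (P : Set G))) {K H : Subgroup G}
    (hKH : IsChiefFactor K H) (hHP : H ≤ P) : CyclicFactor K H := by
  obtain ⟨S, -, hSn, hSp, -, hScomm, hSpow⟩ := hS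
  have := hKH.normal_left
  have hNp := (hPp.to_le hHP).map (QuotientGroup.mk' K)
  have := hSn.map _ (QuotientGroup.mk'_surjective K)
  have hSN : S.map (QuotientGroup.mk' K) ≤ centralizer (H.map (QuotientGroup.mk' K) : Set _) := by
    refine hKH.map_mk.le_centralizer hNp ?_
    rintro _ ⟨s, hs, rfl⟩
    obtain ⟨k, hk⟩ := hSp s hs
    refine ⟨k, ?_⟩
    rw [QuotientGroup.mk'_apply, ← QuotientGroup.mk_pow, mk_mem_centralizer_map_iff]
    intro x hx
    rw [commutatorElement_eq_one_of_mem_centralizer hk (hHP hx)]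
    exact K.one_mem
  rw [cyclicFactor_iff_isCyclic]
  refine hKH.map_mk.isCyclic_of_forall_mem_centralizer hNp (fun q ↦ ?_) (fun q r ↦ ?_)
  · obtain ⟨g, rfl⟩ := QuotientGroup.mk_surjective q
    exact hSN ⟨_, hSpow g, map_pow _ _ _⟩
  · obtain ⟨a, rfl⟩ := QuotientGroup.mk_surjective q
    obtain ⟨b, rfl⟩ := QuotientGroup.mk_surjective r
    exact hSN ⟨_, hScomm a b, map_commutatorElement _ _ _⟩

end

/-- A normal `p`-subgroup `P` of `G` is hypercyclically embedded in `G`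
iff `G/C_G(P)` is strictly `p`-closed. -/
theorem stmt3 [Group G] [Finite G] (p : ℕ) (hp : p.Prime) (P : Subgroup G)
    (hPn : P.Normal) (hPp : IsPGroup p P) :
    (∀ K H : Subgroup G, IsChiefFactor K H → H ≤ P → CyclicFactor K H) ↔
      StrictlyPClosedOver p (Subgroup.centralizer (P : Set G)) := by
  have := Fact.mk hp
  exact ⟨strictlyPClosedOver_centralizer_of_forall_cyclicFactor hp hPn hPp,
    fun hS _ _ ↦ cyclicFactor_of_strictlyPClosedOver_centralizer hPp hS⟩
end

section
/- If a normal p-subgroup P of a finite group G is hypercyclically embedded in G, then the quotient G/C, where C is the intersection of the centralizers C_G(H/K) over all chief factors H/K of G below P, is abelian of exponent dividing p−1. -/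
open Subgroup Pointwise

variable {G : Type*}

/-!
Conjugation makes `G` act on every chief factor `H/K`, through a homomorphism
`G → Aut(H/K)`. When `H/K` has prime order `p` it is cyclic, so `Aut(H/K) ≃ (ℤ/p)ˣ` is
abelian of order `p - 1`; hence commutators and `(p - 1)`-th powers act trivially on `H/K`.
-/

open scoped commutatorElement

theorem IsCyclic.commute_mulAut {Q : Type*} [Group Q] [IsCyclic Q] (x y : MulAut Q) :
    Commute x y :=
  (IsCyclic.mulAutMulEquiv Q).injective <| by rw [map_mul, map_mul, mul_comm]

theorem IsCyclic.pow_totient_mulAut {Q : Type*} [Group Q] [Finite Q] [IsCyclic Q]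
    (x : MulAut Q) : x ^ (Nat.card Q).totient = 1 := by
  have : Finite (MulAut Q) := Finite.of_injective _ (IsCyclic.mulAutMulEquiv Q).injective
  rw [← IsCyclic.card_mulAut]
  exact pow_card_eq_one'

section ConjFactor

variable [Group G] (K H : Subgroup G) [K.Normal] [H.Normal]

noncomputable def conjFactor : G →* MulAut (H ⧸ K.subgroupOf H) where
  toFun g := QuotientGroup.congr _ _ (MulAut.conjNormal g) <| by
    ext x
    rw [Subgroup.map_equiv_eq_comap_symm]
    simp only [mem_comap, mem_subgroupOf, MonoidHom.coe_coe, MulAut.conjNormal_symm_apply]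
    rw [mul_assoc, ‹K.Normal›.mem_comm_iff, mul_inv_cancel_right]
  map_one' := by
    ext x
    induction x using QuotientGroup.induction_on
    simp
  map_mul' g₁ g₂ := by
    ext x
    induction x using QuotientGroup.induction_on
    simp

theorem conjFactor_eq_one_iff {g : G} :
    conjFactor K H g = 1 ↔ ∀ h ∈ H, g * h * g⁻¹ * h⁻¹ ∈ K := by
  rw [MulEquiv.ext_iff, QuotientGroup.mk_surjective.forall, Subtype.forall]
  refine forall₂_congr fun h _ => ?_
  simp only [conjFactor, MonoidHom.coe_mk, OneHom.coe_mk, QuotientGroup.congr_mk,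
    MulAut.one_apply, QuotientGroup.eq, mem_subgroupOf, coe_mul, InvMemClass.coe_inv,
    MulAut.conjNormal_apply, mul_inv_rev, inv_inv]
  -- `g h⁻¹ g⁻¹ h` is conjugate to `(g h g⁻¹ h⁻¹)⁻¹`
  rw [‹K.Normal›.mem_comm_iff, ← K.inv_mem_iff]
  simp only [mul_inv_rev, inv_inv, mul_assoc]

variable {K H}

theorem conjFactor_commutatorElement [IsCyclic (H ⧸ K.subgroupOf H)] (a b : G) :
    conjFactor K H ⁅a, b⁆ = 1 := by
  rw [map_commutatorElement, commutatorElement_eq_one_iff_commute]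
  exact IsCyclic.commute_mulAut _ _

theorem conjFactor_pow_totient [Finite (H ⧸ K.subgroupOf H)] [IsCyclic (H ⧸ K.subgroupOf H)]
    (a : G) : conjFactor K H (a ^ (Nat.card (H ⧸ K.subgroupOf H)).totient) = 1 := by
  rw [map_pow]
  exact IsCyclic.pow_totient_mulAut _

theorem conjFactor_eq_one_of_index_eq_prime {p : ℕ} (hp : p.Prime)
    (hKH : (K.subgroupOf H).index = p) :
    (∀ a b : G, conjFactor K H ⁅a, b⁆ = 1) ∧ ∀ a : G, conjFactor K H (a ^ (p - 1)) = 1 := by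
  have hcard : Nat.card (H ⧸ K.subgroupOf H) = p := hKH
  have : Finite (H ⧸ K.subgroupOf H) := Nat.finite_of_card_ne_zero (hcard ▸ hp.ne_zero)
  have : Fact p.Prime := ⟨hp⟩
  have : IsCyclic (H ⧸ K.subgroupOf H) := isCyclic_of_prime_card hcard
  refine ⟨conjFactor_commutatorElement, fun a => ?_⟩
  simpa [hcard, Nat.totient_prime hp] using conjFactor_pow_totient (K := K) (H := H) a

end ConjFactor

theorem stmt4_general [Group G] (p : ℕ) (hp : p.Prime) (P : Subgroup G)
    (hhe : ∀ K H : Subgroup G, IsChiefFactor K H → H ≤ P → (K.subgroupOf H).index = p) :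
    (∀ a b : G, ∀ K H : Subgroup G, IsChiefFactor K H → H ≤ P →
        ∀ h ∈ H, (a * b * a⁻¹ * b⁻¹) * h * (a * b * a⁻¹ * b⁻¹)⁻¹ * h⁻¹ ∈ K) ∧
    (∀ a : G, ∀ K H : Subgroup G, IsChiefFactor K H → H ≤ P →
        ∀ h ∈ H, (a ^ (p - 1)) * h * (a ^ (p - 1))⁻¹ * h⁻¹ ∈ K) := by
  have hfactor : ∀ K H : Subgroup G, IsChiefFactor K H → H ≤ P →
      (∀ a b : G, ∀ h ∈ H, ⁅a, b⁆ * h * ⁅a, b⁆⁻¹ * h⁻¹ ∈ K) ∧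
        ∀ a : G, ∀ h ∈ H, a ^ (p - 1) * h * (a ^ (p - 1))⁻¹ * h⁻¹ ∈ K := by
    intro K H hchief hHP
    have := hchief.1
    have := hchief.2.1
    obtain ⟨hcomm, hpow⟩ := conjFactor_eq_one_of_index_eq_prime hp (hhe K H hchief hHP)
    exact ⟨fun a b => (conjFactor_eq_one_iff K H).mp (hcomm a b),
      fun a => (conjFactor_eq_one_iff K H).mp (hpow a)⟩
  exact ⟨fun a b K H hchief hHP => (hfactor K H hchief hHP).1 a b,
    fun a K H hchief hHP => (hfactor K H hchief hHP).2 a⟩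

/-- If a normal `p`-subgroup `P` is hypercyclically embedded in `G`
(every chief factor of `G` below `P` has order `p`), then `G/C`, where `C` is the
intersection of the centralizers of the chief factors of `G` below `P`, is abelian
of exponent dividing `p - 1`; i.e. every commutator `[a,b]` and every `a^(p-1)`
centralizes every chief factor of `G` below `P`. -/
theorem stmt4 [Group G] [Finite G] (p : ℕ) (hp : p.Prime) (P : Subgroup G)
    (hPn : P.Normal) (hPp : IsPGroup p P)
    (hhe : ∀ K H : Subgroup G, IsChiefFactor K H → H ≤ P → (K.subgroupOf H).index = p) :
    (∀ a b : G, ∀ K H : Subgroup G, IsChiefFactor K H → H ≤ P →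
        ∀ h ∈ H, (a * b * a⁻¹ * b⁻¹) * h * (a * b * a⁻¹ * b⁻¹)⁻¹ * h⁻¹ ∈ K) ∧
    (∀ a : G, ∀ K H : Subgroup G, IsChiefFactor K H → H ≤ P →
        ∀ h ∈ H, (a ^ (p - 1)) * h * (a ^ (p - 1))⁻¹ * h⁻¹ ∈ K) :=
  stmt4_general p hp P hhe
end

section
/- Let E be a normal subgroup of a finite group G and P a Sylow p-subgroup of E such that gcd(p−1, |G|) = 1. If G is p-supersoluble, then E is p-nilpotent and E/O_{p'}(E) ≤ Z_∞(G/O_{p'}(E)). -/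
/-!
A chief factor `H/K` of order `p` is central: `G` acts on it through `Aut(C_p) ≅ C_{p-1}`, and
`gcd(p - 1, |G|) = 1` makes that action trivial. Hence `G` has a normal `p`-complement `W`, by
induction over a minimal normal subgroup `N`: if `N` is a `p'`-group, pull back the complement of
`G/N`; otherwise `N` is central of order `p`, hence a central Sylow subgroup of the preimage `M` of
that complement, Burnside's transfer theorem gives `M` a normal `p`-complement, and as a normal
Hall subgroup of `M ⊴ G` it is normal in `G`. Then `O_{p'}(E) = W ∩ E`, `E/(W ∩ E)` is a
`p`-group, and every chief factor of `G` between `W ∩ E` and `E` is central of order `p`.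
-/

open Subgroup Pointwise

variable {G : Type*}

open QuotientGroup

section

variable [Group G] {G' : Type*} [Group G']

theorem card_map_eq_relIndex_ker (f : G →* G') (H : Subgroup G) :
    Nat.card (H.map f) = f.ker.relIndex H := by
  rw [← relIndex_bot_left, ← relIndex_comap, MonoidHom.comap_bot]

theorem relIndex_ker_comap_of_surjective {f : G →* G'}
    (hf : Function.Surjective f) (H : Subgroup G') :
    f.ker.relIndex (H.comap f) = Nat.card H := by
  rw [← MonoidHom.comap_bot, relIndex_comap, map_comap_eq_self_of_surjective hf,
    relIndex_bot_left]

theorem relIndex_comap_comap_of_surjective {f : G →* G'}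
    (hf : Function.Surjective f) (K H : Subgroup G') :
    (K.comap f).relIndex (H.comap f) = K.relIndex H := by
  rw [relIndex_comap, map_comap_eq_self_of_surjective hf]

theorem mem_of_coprime_orderOf_index {W : Subgroup G} [W.Normal] {x : G}
    (hx : Nat.Coprime (orderOf x) W.index) : x ∈ W := by
  rw [← QuotientGroup.eq_one_iff, ← orderOf_eq_one_iff, ← Nat.dvd_one, ← hx.gcd_eq_one]
  exact Nat.dvd_gcd (orderOf_map_dvd (mk' W) x) (_root_.orderOf_dvd_natCard _)

theorem Subgroup.Normal.map_subtype_of_coprime {M : Subgroup G} (hM : M.Normal)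
    {K : Subgroup M} [K.Normal] (hK : Nat.Coprime (Nat.card K) K.index) :
    (K.map M.subtype).Normal := by
  constructor
  rintro _ ⟨k, hk, rfl⟩ g
  refine ⟨⟨g * k * g⁻¹, hM.conj_mem k k.2 g⟩, ?_, rfl⟩
  apply mem_of_coprime_orderOf_index
  refine hK.coprime_dvd_left ?_
  rw [orderOf_mk, ← MulAut.conj_apply, MulEquiv.orderOf_eq, orderOf_coe]
  exact Subgroup.orderOf_dvd_natCard K hk

theorem commutator_mem_of_relIndex_eq_prime [Finite G] {p : ℕ} (hp : p.Prime)
    (hco : Nat.Coprime (p - 1) (Nat.card G)) {K H : Subgroup G} (hK : K.Normal)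
    (hH : H.Normal) (hKH : K.relIndex H = p) :
    ∀ h ∈ H, ∀ g : G, h * g * h⁻¹ * g⁻¹ ∈ K := by
  set Q := H.map (mk' K)
  have : Q.Normal := hH.map _ (mk'_surjective K)
  have hQ : Nat.card Q = p := by rw [card_map_eq_relIndex_ker, ker_mk', hKH]
  have : IsCyclic Q := @isCyclic_of_prime_card _ _ _ ⟨hp⟩ hQ
  -- `G` acts on `Q ≅ C_p` through `Aut(C_p)`, of order `p - 1`, coprime to `|G|`.
  have hconj : ∀ g : G, MulAut.conjNormal (H := Q) (g : G ⧸ K) = 1 := by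
    intro g
    rw [← orderOf_eq_one_iff, ← Nat.dvd_one, ← hco.gcd_eq_one]
    refine Nat.dvd_gcd ?_ ((orderOf_map_dvd _ _).trans ((orderOf_map_dvd (mk' K) g).trans
      (_root_.orderOf_dvd_natCard g)))
    have := _root_.orderOf_dvd_natCard (MulAut.conjNormal (H := Q) (g : G ⧸ K))
    rwa [IsCyclic.card_mulAut, hQ, Nat.totient_prime hp] at this
  intro h hh g
  have hgh : (g : G ⧸ K) * h * (g : G ⧸ K)⁻¹ = h := by
    simpa using congrArg Subtype.val
      (DFunLike.congr_fun (hconj g) ⟨(h : G ⧸ K), mem_map_of_mem (mk' K) hh⟩)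
  rw [← QuotientGroup.eq_one_iff, QuotientGroup.mk_mul, QuotientGroup.mk_mul,
    QuotientGroup.mk_mul, QuotientGroup.mk_inv, QuotientGroup.mk_inv]
  nth_rewrite 1 [← hgh]
  group

theorem exists_normal_pComplement_of_le_center [Finite G] {p : ℕ} [Fact p.Prime]
    {M P : Subgroup G} (hM : M.Normal) (hPM : P ≤ M) (hP : IsPGroup p P)
    (hPidx : ¬ p ∣ P.relIndex M) (hPc : P ≤ center G) :
    ∃ W : Subgroup G, W.Normal ∧ W ≤ M ∧ ¬ p ∣ Nat.card W ∧ W.relIndex M = Nat.card P := by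
  have hcard : Nat.card (P.subgroupOf M) = Nat.card P :=
    Nat.card_congr (subgroupOfEquivOfLe hPM).toEquiv
  let S : Sylow p M := (hP.of_equiv (subgroupOfEquivOfLe hPM).symm).toSylow hPidx
  have hS : normalizer (S : Subgroup M) ≤ centralizer (S : Set M) := by
    have hSc : (S : Set M) ⊆ center M := fun x hx =>
      mem_center_iff.mpr fun g => Subtype.ext (mem_center_iff.mp (hPc hx) g)
    rw [centralizer_eq_top_iff_subset.mpr hSc]
    exact le_top
  set K := (MonoidHom.transferSylow S hS).ker
  have hKp : ¬ p ∣ Nat.card K := MonoidHom.not_dvd_card_ker_transferSylow S hS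
  have hKidx : K.index = Nat.card P :=
    (MonoidHom.ker_transferSylow_isComplement' S hS).symm.index_eq_card.trans hcard
  obtain ⟨n, hn⟩ := hP.exists_card_eq
  refine ⟨K.map M.subtype, hM.map_subtype_of_coprime ?_, map_subtype_le K, ?_, ?_⟩
  · rw [hKidx, hn]
    exact Nat.Coprime.pow_right n ((Nat.Prime.coprime_iff_not_dvd Fact.out).mpr hKp).symm
  · rwa [card_map_of_injective M.subtype_injective]
  · rw [← hKidx, ← relIndex_top_right,
      ← relIndex_map_map_of_injective _ _ M.subtype_injective, ← MonoidHom.range_eq_map,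
      range_subtype]

theorem exists_isChiefFactor_le [Finite G] {A B : Subgroup G} (hA : A.Normal)
    (hB : B.Normal) (hAB : A < B) : ∃ N, IsChiefFactor A N ∧ N ≤ B := by
  obtain ⟨N, hNB, hN⟩ :=
    exists_minimal_le_of_wellFoundedLT (fun N : Subgroup G => N.Normal ∧ A < N) B ⟨hB, hAB⟩
  exact ⟨N, ⟨hA, hN.1.1, hN.1.2, fun M hM hAM hMN => hN.eq_of_le ⟨hM, hAM⟩ hMN⟩, hNB⟩

theorem IsChiefFactor.comap_of_surjective {f : G →* G'}
    (hf : Function.Surjective f) {K H : Subgroup G'} (h : IsChiefFactor K H) :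
    IsChiefFactor (K.comap f) (H.comap f) := by
  obtain ⟨hK, hH, hKH, hmax⟩ := h
  refine ⟨hK.comap f, hH.comap f, (comap_lt_comap_of_surjective hf).mpr hKH,
    fun M hM hKM hMH => ?_⟩
  have hker : f.ker ≤ M := by
    rw [← MonoidHom.comap_bot]
    exact (comap_mono bot_le).trans hKM.le
  have hmap : M.map f = H := by
    refine hmax _ (hM.map f hf) ?_ ?_
    · rw [← comap_lt_comap_of_surjective hf, comap_map_eq_self hker]
      exact hKM
    · exact (map_mono hMH).trans (map_comap_le f H)
  rw [← hmap, comap_map_eq_self hker]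

theorem pSupersoluble.of_surjective {p : ℕ} {f : G →* G'}
    (hf : Function.Surjective f) (h : pSupersoluble p G) : pSupersoluble p G' := by
  have hidx (K H : Subgroup G') :
      (K.subgroupOf H).index = ((K.comap f).subgroupOf (H.comap f)).index :=
    (relIndex_comap_comap_of_surjective hf K H).symm
  refine ⟨fun K H hKH => ?_, fun K H hKH => ?_⟩
  · simpa only [hidx] using h.1 _ _ (hKH.comap_of_surjective hf)
  · simpa only [hidx] using h.2 _ _ (hKH.comap_of_surjective hf)

theorem le_center_of_card_eq_prime [Finite G] {p : ℕ} (hp : p.Prime)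
    (hco : Nat.Coprime (p - 1) (Nat.card G)) {N : Subgroup G} (hN : N.Normal)
    (hNp : Nat.card N = p) : N ≤ center G := by
  intro h hh
  rw [mem_center_iff]
  intro g
  have := commutator_mem_of_relIndex_eq_prime hp hco normal_bot hN
    ((relIndex_bot_left N).trans hNp) h hh g
  exact (mul_inv_eq_iff_eq_mul.mp (mul_inv_eq_one.mp ((mem_bot).mp this))).symm

theorem exists_normal_pComplement [Finite G] {p : ℕ} (hp : p.Prime)
    (hco : Nat.Coprime (p - 1) (Nat.card G)) (hsup : pSupersoluble p G) :
    ∃ W : Subgroup G, W.Normal ∧ ¬ p ∣ Nat.card W ∧ ∃ k : ℕ, W.index = p ^ k := by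
  induction hn : Nat.card G using Nat.strong_induction_on generalizing G with
  | _ n ih =>
  rcases subsingleton_or_nontrivial G with hG | hG
  · exact ⟨⊤, normal_top, by simp [hp.ne_one], 0, by simp⟩
  obtain ⟨N, hN, -⟩ :=
    exists_isChiefFactor_le normal_bot normal_top (bot_lt_top (α := Subgroup G))
  have hNn := hN.2.1
  have hquot : Nat.card (G ⧸ N) < n := by
    rw [← hn, card_eq_card_quotient_mul_card_subgroup N]
    exact lt_mul_of_one_lt_right Nat.card_pos ((one_lt_card_iff_ne_bot N).mpr hN.2.2.1.ne')
  obtain ⟨W', hW', hW'p, k, hW'k⟩ := ih _ hquot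
    (hco.coprime_dvd_right (card_quotient_dvd_card N)) (hsup.of_surjective (mk'_surjective N)) rfl
  set M := W'.comap (mk' N)
  have hNM' : N ≤ M := (ker_mk' N).symm.le.trans (MonoidHom.ker_le_comap _ _)
  have hMk : M.index = p ^ k := (index_comap_of_surjective _ (mk'_surjective N)).trans hW'k
  have hNM : N.relIndex M = Nat.card W' := by
    simpa using relIndex_ker_comap_of_surjective (mk'_surjective N) W'
  have hcardM : Nat.card M = Nat.card N * Nat.card W' := by
    rw [← hNM, ← relIndex_bot_left, ← relIndex_bot_left,
      relIndex_mul_relIndex _ _ _ bot_le hNM']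
  by_cases hpN : p ∣ Nat.card N
  · have hNp : Nat.card N = p := by
      have hidx : ((⊥ : Subgroup G).subgroupOf N).index = Nat.card N := relIndex_bot_left N
      exact hidx ▸ hsup.2 ⊥ N hN (hidx ▸ hpN)
    have := Fact.mk hp
    obtain ⟨W, hW, hWM, hWp, hWidx⟩ := exists_normal_pComplement_of_le_center
      (hW'.comap (mk' N)) hNM' (IsPGroup.of_card (hNp.trans (pow_one p).symm)) (by rwa [hNM])
      (le_center_of_card_eq_prime hp hco hNn hNp)
    refine ⟨W, hW, hWp, k + 1, ?_⟩
    rw [← relIndex_mul_index hWM, hWidx, hNp, hMk, pow_succ']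
  · refine ⟨M, hW'.comap _, ?_, k, hMk⟩
    rw [hcardM, hp.dvd_mul]
    exact not_or.mpr ⟨hpN, hW'p⟩

theorem LeHypercenterOver.of_le {O E : Subgroup G} (h : E ≤ O) : LeHypercenterOver O E :=
  ⟨0, fun _ => O, rfl, h, fun _ hi => absurd hi (Nat.not_lt_zero _)⟩

theorem LeHypercenterOver.of_central_factor {L N E : Subgroup G} (hLN : L ≤ N)
    (hcent : ∀ z ∈ N, ∀ g : G, z * g * z⁻¹ * g⁻¹ ∈ L) (h : LeHypercenterOver N E) :
    LeHypercenterOver L E := by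
  obtain ⟨n, Z, hZ0, hEZ, hZ⟩ := h
  refine ⟨n + 1, fun | 0 => L | i + 1 => Z i, rfl, hEZ, ?_⟩
  rintro (_ | i) hi
  · show L ≤ Z 0 ∧ ∀ z ∈ Z 0, ∀ g : G, z * g * z⁻¹ * g⁻¹ ∈ L
    exact hZ0 ▸ ⟨hLN, hcent⟩
  · exact hZ i (by omega)

theorem leHypercenterOver_of_relIndex_eq_pow [Finite G] {p : ℕ} (hp : p.Prime)
    (hco : Nat.Coprime (p - 1) (Nat.card G)) (hsup : pSupersoluble p G) {O E : Subgroup G}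
    (hO : O.Normal) (hE : E.Normal) (hOE : O ≤ E) {m : ℕ} (hm : O.relIndex E = p ^ m) :
    LeHypercenterOver O E := by
  suffices ∀ L : Subgroup G, L.Normal → O ≤ L → L ≤ E → LeHypercenterOver L E from
    this O hO le_rfl hOE
  intro L
  induction L using WellFoundedGT.induction with
  | _ L ih =>
  intro hL hOL hLE
  obtain hLE | hLE := hLE.eq_or_lt
  · exact .of_le hLE.ge
  obtain ⟨N, hLN, hNE⟩ := exists_isChiefFactor_le hL hE hLE
  have hN := hLN.2.1
  have hLltN := hLN.2.2.1
  have hdvd : L.relIndex N ∣ p ^ m := by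
    rw [← hm, ← relIndex_mul_relIndex O L E hOL hLE.le,
      ← relIndex_mul_relIndex L N E hLltN.le hNE]
    exact (dvd_mul_right _ _).mul_left _
  obtain ⟨j, -, hj⟩ := (Nat.dvd_prime_pow hp).mp hdvd
  have hj0 : j ≠ 0 := by
    rintro rfl
    exact hLltN.not_ge (relIndex_eq_one.mp hj)
  have hLNp : L.relIndex N = p :=
    hsup.2 L N hLN (show p ∣ L.relIndex N from hj ▸ dvd_pow_self p hj0)
  exact (ih N hLltN hN (hOL.trans hLltN.le) hNE).of_central_factor hLltN.le
    (commutator_mem_of_relIndex_eq_prime hp hco hL hN hLNp)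

theorem opPrime_eq_inf {p : ℕ} (hp : p.Prime) {W : Subgroup G} [W.Normal] (E : Subgroup G)
    (hWp : ¬ p ∣ Nat.card W) {k : ℕ} (hWk : W.index = p ^ k) : OpPrime p E = W ⊓ E := by
  refine le_antisymm (iSup₂_le fun N hN => le_inf (fun x hx => ?_) hN.1)
    (le_iSup₂_of_le (W ⊓ E) ⟨inf_le_right, ?_, ?_⟩ le_rfl)
  · refine mem_of_coprime_orderOf_index (hWk ▸ ?_)
    exact (Nat.Coprime.pow_right k ((hp.coprime_iff_not_dvd).mpr hN.2.2).symm).coprime_dvd_left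
      (N.orderOf_dvd_natCard hx)
  · rw [inf_subgroupOf_right]
    exact Normal.subgroupOf inferInstance E
  · exact fun h => hWp (h.trans (card_dvd_of_le inf_le_left))

theorem pNilpotent_of_relIndex_eq_pow {p : ℕ} (hp : p.Prime) {O E : Subgroup G}
    (hO : O.Normal) (hOE : O ≤ E) (hOp : ¬ p ∣ Nat.card O) {m : ℕ} (hm : O.relIndex E = p ^ m) :
    pNilpotent p E := by
  refine ⟨O.subgroupOf E, hO.subgroupOf E, ?_, fun q hq hqd => ?_⟩
  · rwa [Nat.card_congr (subgroupOfEquivOfLe hOE).toEquiv]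
  · have hqp : q ∣ p ^ m := hm ▸ hqd
    exact (Nat.prime_dvd_prime_iff_eq hq hp).mp (hq.dvd_of_dvd_pow hqp)

end

theorem stmt6_general [Group G] [Finite G] (p : ℕ) (hp : p.Prime) (E : Subgroup G)
    (hE : E.Normal)
    (hco : Nat.Coprime (p - 1) (Nat.card G))
    (hsup : pSupersoluble p G) :
    pNilpotent p E ∧ LeHypercenterOver (OpPrime p E) E := by
  obtain ⟨W, hW, hWp, k, hWk⟩ := exists_normal_pComplement hp hco hsup
  have hOp : ¬ p ∣ Nat.card (W ⊓ E : Subgroup G) :=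
    fun h => hWp (h.trans (card_dvd_of_le inf_le_left))
  have hOE : (W ⊓ E).relIndex E ∣ p ^ k :=
    inf_relIndex_right W E ▸ hWk ▸ relIndex_dvd_index_of_normal W E
  obtain ⟨m, -, hm⟩ := (Nat.dvd_prime_pow hp).mp hOE
  refine ⟨pNilpotent_of_relIndex_eq_pow hp (normal_inf_normal W E) inf_le_right hOp hm, ?_⟩
  rw [opPrime_eq_inf hp E hWp hWk]
  exact leHypercenterOver_of_relIndex_eq_pow hp hco hsup (normal_inf_normal W E) hE
    inf_le_right hm

/-- `E ⊴ G`, `P` a Sylow `p`-subgroup of `E`, `gcd(p-1,|G|) = 1` and `G`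
`p`-supersoluble imply `E` is `p`-nilpotent and `E/O_{p'}(E) ≤ Z_∞(G/O_{p'}(E))`. -/
theorem stmt6 [Group G] [Finite G] (p : ℕ) (hp : p.Prime) (E P : Subgroup G)
    (hE : E.Normal) (hPE : P ≤ E) (hPp : IsPGroup p P)
    (hSyl : ¬ p ∣ (P.subgroupOf E).index)
    (hco : Nat.Coprime (p - 1) (Nat.card G))
    (hsup : pSupersoluble p G) :
    pNilpotent p E ∧ LeHypercenterOver (OpPrime p E) E :=
  stmt6_general p hp E hE hco hsup
end

section
/- Let H, K, and N be pairwise permutable subgroups of a finite group G with H a Hall subgroup of G. Then N ∩ (HK) = (N ∩ H)(N ∩ K). -/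
open Subgroup Pointwise

variable {G : Type*}

/-!
Put `D = N ∩ HK`. By Dedekind's modular law `H` and `K` both permute with `D`, so `HD` and `KD`
are subgroups. Hence `|D : H ∩ D| = |HD : H|` divides `|G : H|`, while
`|D : K ∩ D| = |KD : K|` divides `|HK : K| = |H : H ∩ K|`, a divisor of `|H|`. As `H` is a Hall
subgroup these two indices are coprime, and two subgroups of `D` of coprime indices in `D` have
product `D`.
-/

namespace Subgroup

variable [Group G]

theorem natCard_coe_mul (A B : Subgroup G) :
    Nat.card (A * B : Set G) = B.relIndex A * Nat.card B := by
  have hsmul (a : A) : a • ((1 : G) : G ⧸ B) = (a : G) := by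
    change (a : G) • ((1 : G) : G ⧸ B) = _
    rw [MulAction.Quotient.smul_mk, smul_eq_mul, mul_one]
  have horbit : MulAction.orbit A ((1 : G) : G ⧸ B) = (A : Set G).image (↑) := by
    ext x
    simp [MulAction.mem_orbit_iff, hsmul]
  have hstab : MulAction.stabilizer A ((1 : G) : G ⧸ B) = B.subgroupOf A := by
    ext a
    simp [MulAction.mem_stabilizer_iff, hsmul, mem_subgroupOf, QuotientGroup.eq]
  rw [card_mul_eq_card_subgroup_mul_card_quotient, mul_comm, relIndex, ← hstab,
    MulAction.index_stabilizer, horbit, Nat.card_coe_set_eq]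

theorem relIndex_mul_natCard {B D : Subgroup G} (h : B ≤ D) :
    B.relIndex D * Nat.card B = Nat.card D := by
  rw [mul_comm, ← relIndex_bot_left, ← relIndex_bot_left, relIndex_mul_relIndex ⊥ B D bot_le h]

theorem coe_sup_of_permutes {A B : Subgroup G} (h : permutes A B) :
    ((A ⊔ B : Subgroup G) : Set G) = A * B := by
  let AB : Subgroup G :=
    { carrier := A * B
      one_mem' := ⟨1, A.one_mem, 1, B.one_mem, one_mul 1⟩
      mul_mem' := fun {x y} hx hy => by
        have hxy := Set.mul_mem_mul hx hy
        rwa [mul_assoc, ← mul_assoc (B : Set G), ← h, mul_assoc, coe_mul_coe, ← mul_assoc,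
          coe_mul_coe] at hxy
      inv_mem' := fun {x} hx => by
        have hx' := Set.inv_mem_inv.mpr hx
        rwa [mul_inv_rev, inv_coe_set, inv_coe_set, ← h] at hx' }
  refine subset_antisymm (sup_le (fun a ha => ?_) fun b hb => ?_ : A ⊔ B ≤ AB) ?_
  · exact ⟨a, ha, 1, B.one_mem, mul_one a⟩
  · exact ⟨1, A.one_mem, b, hb, one_mul b⟩
  · exact Set.mul_subset_iff.mpr fun a ha b hb => mul_mem_sup ha hb

theorem permutes_inf_of_le {A B C : Subgroup G} (hAB : permutes A B) (hAC : A ≤ C) :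
    permutes A (B ⊓ C) := by
  rw [permutes, mul_inf_assoc A B C hAC, inf_comm, inf_mul_assoc C B A hAC, hAB, Set.inter_comm]

variable [Finite G]

theorem relIndex_sup_left_of_permutes {A B : Subgroup G} (h : permutes A B) :
    A.relIndex (A ⊔ B) = A.relIndex B := by
  have hcard : A.relIndex (A ⊔ B) * Nat.card A = A.relIndex B * Nat.card A := by
    rw [relIndex_mul_natCard le_sup_left, ← natCard_coe_mul, ← h, ← coe_sup_of_permutes h]
    rfl
  exact Nat.eq_of_mul_eq_mul_right Nat.card_pos hcard

theorem coe_mul_eq_of_coprime_relIndex {A B D : Subgroup G} (hA : A ≤ D) (hB : B ≤ D)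
    (hcop : (A.relIndex D).Coprime (B.relIndex D)) : (A : Set G) * B = D := by
  have hsub : (A : Set G) * B ⊆ D :=
    Set.mul_subset_iff.mpr fun a ha b hb => D.mul_mem (hA ha) (hB hb)
  have hdvd : B.relIndex D ∣ B.relIndex A := by
    have h := relIndex_inf_mul_relIndex B A D
    rw [inf_of_le_left hA] at h
    exact hcop.symm.dvd_of_dvd_mul_right (h ▸ relIndex_dvd_of_le_left D inf_le_left)
  refine Set.eq_of_subset_of_ncard_le hsub ?_ (Set.toFinite _)
  rw [← Nat.card_coe_set_eq, ← Nat.card_coe_set_eq, natCard_coe_mul, SetLike.coe_sort_coe,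
    ← relIndex_mul_natCard hB]
  exact Nat.mul_le_mul_right _
    (Nat.le_of_dvd (Nat.pos_of_dvd_of_pos (relIndex_dvd_card B A) Nat.card_pos) hdvd)

end Subgroup

/-- If `H`, `K`, `N` are pairwise permutable and `H` is a Hall subgroup,
then `N ∩ HK = (N ∩ H)(N ∩ K)`. -/
theorem stmt8 [Group G] [Finite G] (H K N : Subgroup G)
    (hHK : permutes H K) (hHN : permutes H N) (hKN : permutes K N)
    (hHall : Nat.Coprime (Nat.card H) H.index) :
    (N : Set G) ∩ ((H : Set G) * (K : Set G)) =
      ((N ⊓ H : Subgroup G) : Set G) * ((N ⊓ K : Subgroup G) : Set G) := by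
  set D := N ⊓ (H ⊔ K)
  have hHD : permutes H D := permutes_inf_of_le hHN le_sup_left
  have hKD : permutes K D := permutes_inf_of_le hKN le_sup_right
  have hHD_dvd : H.relIndex D ∣ H.index :=
    relIndex_sup_left_of_permutes hHD ▸ relIndex_dvd_index_of_le le_sup_left
  have hKD_dvd : K.relIndex D ∣ Nat.card H := by
    have hle : K ⊔ D ≤ K ⊔ H := sup_le le_sup_left (inf_le_right.trans (sup_comm H K).le)
    calc K.relIndex D = K.relIndex (K ⊔ D) := (relIndex_sup_left_of_permutes hKD).symm
      _ ∣ K.relIndex (K ⊔ H) := Dvd.intro _ (relIndex_mul_relIndex _ _ _ le_sup_left hle)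
      _ = K.relIndex H := relIndex_sup_left_of_permutes hHK.symm
      _ ∣ Nat.card H := relIndex_dvd_card K H
  have hcop : (H.relIndex D).Coprime (K.relIndex D) :=
    (hHall.symm.coprime_dvd_left hHD_dvd).coprime_dvd_right hKD_dvd
  have hinf_D (L : Subgroup G) (hL : L ≤ H ⊔ K) : L ⊓ D = N ⊓ L := by
    rw [inf_left_comm, inf_of_le_left hL]
  rw [← hinf_D H le_sup_left, ← hinf_D K le_sup_right,
    coe_mul_eq_of_coprime_relIndex inf_le_right inf_le_right
      (by rwa [inf_relIndex_right, inf_relIndex_right]),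
    coe_inf, coe_sup_of_permutes hHK]
end

section
/- Suppose a finite group G has a complete Hall σ-set {H_1, ..., H_t} and H is a subgroup of G that is σ-semipermutable with respect to it. If R ⊴ G, and for every prime p dividing |H| a Sylow p-subgroup of H is not contained in R, then HR/R is σ-semipermutable in G/R with respect to the complete Hall σ-set {H_1R/R, ..., H_tR/R}. -/
open Subgroup Pointwise

variable {G : Type*}

/-
Reduction modulo `R` maps Hall `σ_i`-subgroups onto Hall `σ_i`-subgroups, and the identities
`(KR/R)^{xR} = K^x R/R` and `(AR/R)(BR/R) = ABR/R` carry permutability down to `G/R`. The only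
point is that coprimality of `|HR/R|` and `|H_iR/R|` must lift to `|H|` and `|H_i|`. A Sylow
`p`-subgroup of `H` not contained in `R` has a nontrivial `p`-group as image, so every prime
divisor of `|H|` divides `|HR/R|`; and a prime of `σ_i` dividing `|G/R|` divides `|H_iR/R|`,
because the index of this Hall subgroup is a `σ_i'`-number.
-/

section

variable {Q : Type*} [Group G] [Group Q] {f : G →* Q}

theorem sconj_map (f : G →* Q) (x : G) (K : Subgroup G) :
    sconj (f x) (K.map f) = (sconj x K).map f := by
  unfold sconj
  rw [map_map, map_map]
  refine congrArg (map · K) (MonoidHom.ext fun g => ?_)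
  simp [MulAut.conj, mul_assoc]

theorem permutes.map {A B : Subgroup G} (h : permutes A B) (f : G →* Q) :
    permutes (A.map f) (B.map f) := by
  unfold permutes at h ⊢
  rw [coe_map, coe_map, ← Set.image_mul, ← Set.image_mul, h]

theorem IsHallSigmaSubgroup.map {s : Set ℕ} {K : Subgroup G} (hK : IsHallSigmaSubgroup s K)
    (hf : Function.Surjective f) : IsHallSigmaSubgroup s (K.map f) :=
  ⟨fun q hq hqK => hK.1 q hq
      (hqK.trans (card_dvd_of_surjective (f.subgroupMap K) (f.subgroupMap_surjective K))),
    fun q hq hqK => hK.2 q hq (hqK.trans (K.index_map_dvd hf))⟩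

theorem IsHallSigmaSubgroup.prime_dvd_card {s : Set ℕ} {K : Subgroup G}
    (hK : IsHallSigmaSubgroup s K) {q : ℕ} (hq : q.Prime) (hqs : q ∈ s)
    (hqG : q ∣ Nat.card G) : q ∣ Nat.card K := by
  rw [← K.card_mul_index] at hqG
  exact (hq.dvd_mul.mp hqG).resolve_right (hK.2 q hq · hqs)

theorem IsCompleteHallSigmaSet.map {ι : Type*} {σ : ι → Set ℕ} {t : ℕ}
    {ℋ : Fin t → Subgroup G} {j : Fin t → ι} (hℋ : IsCompleteHallSigmaSet σ ℋ j)
    (hf : Function.Surjective f) : IsCompleteHallSigmaSet σ (fun i => (ℋ i).map f) j := by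
  refine ⟨hℋ.1, fun i => (hℋ.2.1 i).map hf, ?_⟩
  rintro a ⟨q, hq, hqa, hqQ⟩
  exact hℋ.2.2 a ⟨q, hq, hqa, hqQ.trans (card_dvd_of_surjective f hf)⟩

theorem Sylow.prime_dvd_card_map [Finite G] {p : ℕ} [Fact p.Prime] {H : Subgroup G}
    (P : Sylow p H) (hP : ¬ (P : Subgroup H).map H.subtype ≤ f.ker) :
    p ∣ Nat.card (H.map f) := by
  set P' := (P : Subgroup H).map H.subtype
  obtain ⟨g, hgP, hg⟩ := SetLike.not_le_iff_exists.mp hP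
  have : Finite (P'.map f) := Finite.of_surjective _ (f.subgroupMap_surjective P')
  have hnt : Nontrivial (P'.map f) :=
    (nontrivial_iff_exists_ne_one _).2 ⟨f g, mem_map_of_mem f hgP, hg⟩
  obtain ⟨n, hn, hcard⟩ := ((P.2.map H.subtype).map f).nontrivial_iff_card.mp hnt
  calc p ∣ p ^ n := dvd_pow_self p hn.ne'
    _ = Nat.card (P'.map f) := hcard.symm
    _ ∣ Nat.card (H.map f) := card_dvd_of_le (map_mono (map_subtype_le _))

theorem coprime_card_of_coprime_card_map {s : Set ℕ} {H K : Subgroup G}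
    (hK : IsHallSigmaSubgroup s K) (hf : Function.Surjective f)
    (hH : ∀ p : ℕ, p.Prime → p ∣ Nat.card H → p ∣ Nat.card (H.map f))
    (hcop : Nat.Coprime (Nat.card (H.map f)) (Nat.card (K.map f))) :
    Nat.Coprime (Nat.card H) (Nat.card K) := by
  refine Nat.coprime_of_dvd fun q hq hqH hqK => hq.one_lt.ne' ?_
  have hqHf : q ∣ Nat.card (H.map f) := hH q hq hqH
  have hqKf : q ∣ Nat.card (K.map f) :=
    (hK.map hf).prime_dvd_card hq (hK.1 q hq hqK) (hqHf.trans (card_subgroup_dvd_card _))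
  exact Nat.eq_one_of_dvd_coprimes hcop hqHf hqKf

end

theorem stmt11_general {ι : Type*} [Group G] [Finite G] (σ : ι → Set ℕ)
    {t : ℕ} (ℋ : Fin t → Subgroup G) (j : Fin t → ι)
    (hH : IsCompleteHallSigmaSet σ ℋ j)
    (H : Subgroup G) (hs : SigmaSemipermutable H ℋ)
    (R : Subgroup G) [hR : R.Normal]
    (hSyl : ∀ p : ℕ, p.Prime → p ∣ Nat.card H →
      ∀ Q : Sylow p H, ¬ (Q : Subgroup H).map H.subtype ≤ R) :
    IsCompleteHallSigmaSet σ (fun i => (ℋ i).map (QuotientGroup.mk' R)) j ∧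
    SigmaSemipermutable (H.map (QuotientGroup.mk' R))
      (fun i => (ℋ i).map (QuotientGroup.mk' R)) := by
  have hsurj := QuotientGroup.mk'_surjective R
  have hdvd : ∀ p : ℕ, p.Prime → p ∣ Nat.card H → p ∣ Nat.card (H.map (QuotientGroup.mk' R)) :=
    fun p hp hpH => by
      have : Fact p.Prime := ⟨hp⟩
      obtain ⟨P⟩ : Nonempty (Sylow p H) := inferInstance
      exact P.prime_dvd_card_map (by rw [QuotientGroup.ker_mk']; exact hSyl p hp hpH P)
  refine ⟨hH.map hsurj, fun i hcop xbar => ?_⟩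
  obtain ⟨x, rfl⟩ := hsurj xbar
  rw [sconj_map]
  exact (hs i (coprime_card_of_coprime_card_map (hH.2.1 i) hsurj hdvd hcop) x).map _

/-- If `H` is σ-semipermutable with respect to the complete Hall σ-set
`{H_1,...,H_t}`, `R ⊴ G` and no Sylow subgroup of `H` lies in `R`, then `HR/R` is
σ-semipermutable in `G/R` with respect to the complete Hall σ-set `{H_1R/R,...,H_tR/R}`. -/
theorem stmt11 {ι : Type*} [Group G] [Finite G] (σ : ι → Set ℕ)
    (hσ : IsPrimePartition σ) {t : ℕ} (ℋ : Fin t → Subgroup G) (j : Fin t → ι)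
    (hH : IsCompleteHallSigmaSet σ ℋ j)
    (H : Subgroup G) (hs : SigmaSemipermutable H ℋ)
    (R : Subgroup G) [hR : R.Normal]
    (hSyl : ∀ p : ℕ, p.Prime → p ∣ Nat.card H →
      ∀ Q : Sylow p H, ¬ (Q : Subgroup H).map H.subtype ≤ R) :
    IsCompleteHallSigmaSet σ (fun i => (ℋ i).map (QuotientGroup.mk' R)) j ∧
    SigmaSemipermutable (H.map (QuotientGroup.mk' R))
      (fun i => (ℋ i).map (QuotientGroup.mk' R)) :=
  stmt11_general σ ℋ j hH H hs R (hR := hR) hSyl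
end

section
/- Let {H_1, ..., H_t} be a complete Hall σ-set of a finite group G and H a subgroup of G that is σ-semipermutable with respect to it. If L is a subgroup with H ≤ L ≤ G and {H_1 ∩ L, ..., H_t ∩ L} is a complete Hall σ-set of L, then H is σ-semipermutable in L with respect to {H_1 ∩ L, ..., H_t ∩ L}. -/
open Subgroup Pointwise

variable {G : Type*}

lemma sconj_subgroupOf [Group G] {L : Subgroup G} (x : L) (K : Subgroup G) :
    sconj x (K.subgroupOf L) = (sconj (x : G) K).subgroupOf L := by
  ext y
  simp only [sconj, mem_map_equiv, mem_subgroupOf]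
  rfl

/-- Dedekind's modular law: `A (B ∩ L) = AB ∩ L = BA ∩ L = (B ∩ L) A` as `A ≤ L`. -/
lemma permutes_subgroupOf [Group G] {A L : Subgroup G} (hAL : A ≤ L) {B : Subgroup G}
    (h : permutes A B) : permutes (A.subgroupOf L) (B.subgroupOf L) := by
  unfold permutes at h ⊢
  apply Set.image_injective.mpr L.subtype_injective
  rw [Set.image_mul, Set.image_mul]
  simp only [← coe_map, subgroupOf_map_subtype, inf_of_le_left hAL]
  rw [mul_inf_assoc _ _ _ hAL, inf_comm, inf_mul_assoc _ _ _ hAL, h, Set.inter_comm]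

lemma IsHallSigmaSubgroup.prime_dvd_card_s12 {X : Type*} [Group X] {s : Set ℕ} {K : Subgroup X}
    (hK : IsHallSigmaSubgroup s K) {p : ℕ} (hp : p.Prime) (hps : p ∈ s)
    (hpX : p ∣ Nat.card X) : p ∣ Nat.card K := by
  rw [← K.card_mul_index] at hpX
  exact (hp.dvd_mul.mp hpX).resolve_right fun h => hK.2 p hp h hps

lemma coprime_card_of_coprime_card_subgroupOf [Group G] {s : Set ℕ} {H K L : Subgroup G}
    (hHL : H ≤ L) (hK : IsHallSigmaSubgroup s K) (hKL : IsHallSigmaSubgroup s (K.subgroupOf L))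
    (h : Nat.Coprime (Nat.card (H.subgroupOf L)) (Nat.card (K.subgroupOf L))) :
    Nat.Coprime (Nat.card H) (Nat.card K) := by
  rw [Nat.card_congr (subgroupOfEquivOfLe hHL).toEquiv] at h
  refine Nat.coprime_of_dvd fun p hp hpH hpK => Nat.not_coprime_of_dvd_of_dvd hp.one_lt hpH ?_ h
  exact hKL.prime_dvd_card_s12 hp (hK.1 p hp hpK) (hpH.trans (card_dvd_of_le hHL))

theorem stmt12_general {ι : Type*} [Group G] (σ : ι → Set ℕ)
    {t : ℕ} (ℋ : Fin t → Subgroup G) (j : Fin t → ι)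
    (hH : IsCompleteHallSigmaSet σ ℋ j)
    (H : Subgroup G) (hs : SigmaSemipermutable H ℋ)
    (L : Subgroup G) (hHL : H ≤ L)
    (hred : IsCompleteHallSigmaSet σ (fun i => (ℋ i).subgroupOf L) j) :
    SigmaSemipermutable (H.subgroupOf L) (fun i => (ℋ i).subgroupOf L) := by
  intro i hi x
  have hco := coprime_card_of_coprime_card_subgroupOf hHL (hH.2.1 i) (hred.2.1 i) hi
  rw [sconj_subgroupOf]
  exact permutes_subgroupOf hHL (hs i hco x)

/-- If `H` is σ-semipermutable in `G` with respect to `{H_1,...,H_t}`,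
`H ≤ L ≤ G` and `{H_1 ∩ L,...,H_t ∩ L}` is a complete Hall σ-set of `L`, then `H` is
σ-semipermutable in `L` with respect to `{H_1 ∩ L,...,H_t ∩ L}`. -/
theorem stmt12 {ι : Type*} [Group G] [Finite G] (σ : ι → Set ℕ)
    (hσ : IsPrimePartition σ) {t : ℕ} (ℋ : Fin t → Subgroup G) (j : Fin t → ι)
    (hH : IsCompleteHallSigmaSet σ ℋ j)
    (H : Subgroup G) (hs : SigmaSemipermutable H ℋ)
    (L : Subgroup G) (hHL : H ≤ L)
    (hred : IsCompleteHallSigmaSet σ (fun i => (ℋ i).subgroupOf L) j) :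
    SigmaSemipermutable (H.subgroupOf L) (fun i => (ℋ i).subgroupOf L) :=
  stmt12_general σ ℋ j hH H hs L hHL hred
end
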